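/- arXiv:2002.01214 — 4 statements merged into one kernel-verified Lean document; each statement's English description precedes it below -/
import Mathlib

section
/- For the m-adic acceptor with alphabet Σ = {0,...,m-1} and transition matrices P(x) = [[1 - x/m, x/m], [1 - (x+1)/m, (x+1)/m]], for every word u = x_1...x_k the (1,2)-entry of the matrix product P(x_1)···P(x_k) equals the m-adic fraction 0.x_k...x_1 = Σ_{i=1}^{k} x_i / m^{k-i+1}. -/
open Matrix

theorem madic_aux (m : ℕ) (hm : 2 ≤ m)
    (P : ℕ → Matrix (Fin 2) (Fin 2) ℝ)
    (hP : ∀ x : ℕ, P x =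
      !![1 - (x : ℝ) / m, (x : ℝ) / m;
         1 - ((x : ℝ) + 1) / m, ((x : ℝ) + 1) / m])
    (u : List ℕ) :
    ((u.map P).prod) 0 1 =
      (∑ i : Fin u.length, (u.get i : ℝ) / (m : ℝ) ^ (u.length - i.val))
    ∧ ((u.map P).prod) 1 1 - ((u.map P).prod) 0 1 = 1 / (m : ℝ) ^ u.length := by
  induction u with
  | nil => simp [Matrix.one_apply]
  | cons x u ih =>
    obtain ⟨ih1, ih2⟩ := ih
    simp only [List.map_cons, List.prod_cons, hP x]
    have h01 : (!![1 - (x : ℝ) / m, (x : ℝ) / m;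
         1 - ((x : ℝ) + 1) / m, ((x : ℝ) + 1) / m] * (List.map P u).prod) 0 1
        = (1 - (x : ℝ) / m) * ((u.map P).prod) 0 1 + (x : ℝ) / m * ((u.map P).prod) 1 1 := by
      simp [Matrix.mul_apply, Fin.sum_univ_two]
    have h11 : (!![1 - (x : ℝ) / m, (x : ℝ) / m;
         1 - ((x : ℝ) + 1) / m, ((x : ℝ) + 1) / m] * (List.map P u).prod) 1 1
        = (1 - ((x : ℝ) + 1) / m) * ((u.map P).prod) 0 1
          + ((x : ℝ) + 1) / m * ((u.map P).prod) 1 1 := by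
      simp [Matrix.mul_apply, Fin.sum_univ_two]
    constructor
    · rw [h01]
      show _ = ∑ i : Fin (u.length + 1),
        ((x :: u).get (Fin.cast (List.length_cons : (x :: u).length = u.length + 1).symm i) : ℝ)
          / (m : ℝ) ^ (u.length + 1 - i.val)
      rw [Fin.sum_univ_succ]
      have hz : ((x :: u).get (Fin.cast (List.length_cons : (x :: u).length = u.length + 1).symm 0) : ℝ) = x := rfl
      have hs : ∀ i : Fin u.length,
          ((x :: u).get (Fin.cast (List.length_cons : (x :: u).length = u.length + 1).symm i.succ) : ℝ) = u.get i :=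
        fun i => rfl
      rw [hz]
      simp only [hs, Fin.val_succ, Fin.val_zero, Nat.succ_sub_succ, Nat.sub_zero]
      rw [← ih1]
      linear_combination ((x : ℝ) / m) * ih2
    · rw [h01, h11]
      show _ = 1 / (m : ℝ) ^ (u.length + 1)
      linear_combination (1 / (m : ℝ)) * ih2

theorem madic_entry (m : ℕ) (hm : 2 ≤ m)
    (P : ℕ → Matrix (Fin 2) (Fin 2) ℝ)
    (hP : ∀ x : ℕ, P x =
      !![1 - (x : ℝ) / m, (x : ℝ) / m;
         1 - ((x : ℝ) + 1) / m, ((x : ℝ) + 1) / m])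
    (u : List ℕ) (hu : ∀ x ∈ u, x < m) :
    ((u.map P).prod) 0 1 =
      ∑ i : Fin u.length, (u.get i : ℝ) / (m : ℝ) ^ (u.length - i.val) := by
  exact (madic_aux m hm P hP u).1
end

section
/- Let Q be an n×n real matrix with i-th row sums σ_i, j-th column sums σ'_j, and total entry sum σ''. The (n+2)×(n+2) matrix Q₁ obtained by bordering Q with a zero first row, first column entries -σ_1,...,-σ_n, last row (σ'', -σ'_1,...,-σ'_n, 0), and zero last column has all row sums and all column sums equal to 0. Moreover, if Q₁ and Q₁' are two such bordered matrices arising from Q and Q', then Q₁·Q₁' is the bordered matrix of Q·Q', and (0,π,0) Q₁ (0,f,0)ᵀ = π Q f for all π ∈ ℝ^n, f ∈ ℝ^n. -/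
open Matrix

/-- The bordered matrix `Q₁` of an `n × n` matrix `Q`: first row zero, first column
entries `-σ_i` (negative row sums), last row `(σ'', -σ'_1, …, -σ'_n, 0)`, last column zero. -/
def border {n : ℕ} (Q : Matrix (Fin n) (Fin n) ℝ) :
    Matrix (Unit ⊕ Fin n ⊕ Unit) (Unit ⊕ Fin n ⊕ Unit) ℝ :=
  Matrix.of fun i j =>
    match i, j with
    | Sum.inl _, _ => 0
    | Sum.inr (Sum.inl a), Sum.inl _ => -(∑ b, Q a b)
    | Sum.inr (Sum.inl a), Sum.inr (Sum.inl b) => Q a b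
    | Sum.inr (Sum.inl _), Sum.inr (Sum.inr _) => 0
    | Sum.inr (Sum.inr _), Sum.inl _ => ∑ a, ∑ b, Q a b
    | Sum.inr (Sum.inr _), Sum.inr (Sum.inl b) => -(∑ a, Q a b)
    | Sum.inr (Sum.inr _), Sum.inr (Sum.inr _) => 0

section lemmas
variable {n : ℕ} (Q : Matrix (Fin n) (Fin n) ℝ)

@[simp] lemma border_11 (i j : Unit) : border Q (Sum.inl i) (Sum.inl j) = 0 := rfl
@[simp] lemma border_12 (i : Unit) (b : Fin n) : border Q (Sum.inl i) (Sum.inr (Sum.inl b)) = 0 := rfl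
@[simp] lemma border_13 (i j : Unit) : border Q (Sum.inl i) (Sum.inr (Sum.inr j)) = 0 := rfl
@[simp] lemma border_21 (a : Fin n) (j : Unit) : border Q (Sum.inr (Sum.inl a)) (Sum.inl j) = -(∑ b, Q a b) := rfl
@[simp] lemma border_22 (a b : Fin n) : border Q (Sum.inr (Sum.inl a)) (Sum.inr (Sum.inl b)) = Q a b := rfl
@[simp] lemma border_23 (a : Fin n) (j : Unit) : border Q (Sum.inr (Sum.inl a)) (Sum.inr (Sum.inr j)) = 0 := rfl
@[simp] lemma border_31 (i j : Unit) : border Q (Sum.inr (Sum.inr i)) (Sum.inl j) = ∑ a, ∑ b, Q a b := rfl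
@[simp] lemma border_32 (i : Unit) (b : Fin n) : border Q (Sum.inr (Sum.inr i)) (Sum.inr (Sum.inl b)) = -(∑ a, Q a b) := rfl
@[simp] lemma border_33 (i j : Unit) : border Q (Sum.inr (Sum.inr i)) (Sum.inr (Sum.inr j)) = 0 := rfl

end lemmas

theorem border_properties {n : ℕ} (Q Q' : Matrix (Fin n) (Fin n) ℝ) :
    (∀ i, ∑ j, border Q i j = 0) ∧
    (∀ j, ∑ i, border Q i j = 0) ∧
    (border Q * border Q' = border (Q * Q')) ∧
    (∀ π f : Fin n → ℝ,
      (Sum.elim 0 (Sum.elim π 0) : Unit ⊕ Fin n ⊕ Unit → ℝ) ⬝ᵥ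
          (border Q).mulVec (Sum.elim 0 (Sum.elim f 0)) = π ⬝ᵥ Q.mulVec f) := by
  refine ⟨?_, ?_, ?_, ?_⟩
  · rintro (i | a | i) <;> simp [Fintype.sum_sum_type] <;>
      rw [Finset.sum_comm] <;> ring
  · rintro (j | b | j) <;> simp [Fintype.sum_sum_type] <;>
      rw [Finset.sum_comm] <;> ring
  · ext i j
    rcases i with (i | a | i) <;> rcases j with (j | b | j) <;>
      simp [mul_apply, Fintype.sum_sum_type, Finset.mul_sum, Finset.sum_mul, mul_comm]
    · rw [Finset.sum_comm]
    · rw [Finset.sum_comm]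
      exact Finset.sum_congr rfl fun b _ => by rw [Finset.sum_comm]
    · rw [Finset.sum_comm]
  · intro π f
    simp [dotProduct, mulVec, Fintype.sum_sum_type, Finset.mul_sum]
end

section
/- The class of monoidal generalized automaton languages is closed under union with languages accepted by 0/1-acceptance monoidal stochastic automata: if π Q(u) f defines L with cut point λ ≤ 1 via a block-diagonal construction Q''(x) = diag(Q(x), Q'(x)), π'' = ½(π, π'), f'' = (f; f'), where π' Q'(u) f' ∈ {0,1} for all u and λ < 1, then u ∈ L ∪ R iff π'' Q''(u) f'' > λ/2, where R = {u : π' Q'(u) f' = 1}. -/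
open Matrix

theorem union_block_diag {n m : ℕ} {M : Type} [Monoid M]
    (Q : M →* Matrix (Fin n) (Fin n) ℝ) (Q' : M →* Matrix (Fin m) (Fin m) ℝ)
    (π f : Fin n → ℝ) (π' f' : Fin m → ℝ) (lam : ℝ)
    (hlam0 : 0 ≤ lam) (hlam1 : lam < 1)
    (hstoch : ∀ u : M, 0 ≤ π ⬝ᵥ (Q u).mulVec f ∧ π ⬝ᵥ (Q u).mulVec f ≤ 1)
    (h01 : ∀ u : M, π' ⬝ᵥ (Q' u).mulVec f' = 0 ∨ π' ⬝ᵥ (Q' u).mulVec f' = 1) :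
    ∀ u : M,
      (π ⬝ᵥ (Q u).mulVec f > lam ∨ π' ⬝ᵥ (Q' u).mulVec f' = 1) ↔
        (fun s : Fin n ⊕ Fin m => (1 / 2) * Sum.elim π π' s) ⬝ᵥ
            (Matrix.fromBlocks (Q u) 0 0 (Q' u)).mulVec (Sum.elim f f') >
          lam / 2 := by
  intro u
  have key : (fun s : Fin n ⊕ Fin m => (1 / 2) * Sum.elim π π' s) ⬝ᵥ
      (Matrix.fromBlocks (Q u) 0 0 (Q' u)).mulVec (Sum.elim f f')
      = (1/2) * (π ⬝ᵥ (Q u).mulVec f) + (1/2) * (π' ⬝ᵥ (Q' u).mulVec f') := by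
    simp [dotProduct, mulVec, Fintype.sum_sum_type, Finset.mul_sum, Finset.sum_mul,
      mul_assoc, mul_comm, mul_left_comm]
  rw [key]
  obtain ⟨ha0, ha1⟩ := hstoch u
  constructor
  · rintro (h | h)
    · rcases h01 u with hb | hb <;> rw [hb] <;> nlinarith
    · rw [h]; nlinarith
  · intro h
    by_contra hc
    push_neg at hc
    obtain ⟨h1, h2⟩ := hc
    rcases h01 u with hb | hb
    · rw [hb] at h; nlinarith
    · exact h2 hb
end

section
/- With the same block-diagonal construction, intersection is realized with cut point (λ+1)/2: u ∈ L ∩ R iff π'' Q''(u) f'' > (λ+1)/2, where L = {u : π Q(u) f > λ} with 0 ≤ π Q(u) f ≤ 1 and R = {u : π' Q'(u) f' = 1} with π' Q'(u) f' ∈ {0,1}. -/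
open Matrix

theorem inter_block_diag {n m : ℕ} {M : Type} [Monoid M]
    (Q : M →* Matrix (Fin n) (Fin n) ℝ) (Q' : M →* Matrix (Fin m) (Fin m) ℝ)
    (π f : Fin n → ℝ) (π' f' : Fin m → ℝ) (lam : ℝ)
    (hlam0 : 0 ≤ lam) (hlam1 : lam ≤ 1)
    (hstoch : ∀ u : M, 0 ≤ π ⬝ᵥ (Q u).mulVec f ∧ π ⬝ᵥ (Q u).mulVec f ≤ 1)
    (h01 : ∀ u : M, π' ⬝ᵥ (Q' u).mulVec f' = 0 ∨ π' ⬝ᵥ (Q' u).mulVec f' = 1) :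
    ∀ u : M,
      (π ⬝ᵥ (Q u).mulVec f > lam ∧ π' ⬝ᵥ (Q' u).mulVec f' = 1) ↔
        (fun s : Fin n ⊕ Fin m => (1 / 2) * Sum.elim π π' s) ⬝ᵥ
            (Matrix.fromBlocks (Q u) 0 0 (Q' u)).mulVec (Sum.elim f f') >
          (lam + 1) / 2 := by
  intro u
  have key : (fun s : Fin n ⊕ Fin m => (1 / 2) * Sum.elim π π' s) ⬝ᵥ
      (Matrix.fromBlocks (Q u) 0 0 (Q' u)).mulVec (Sum.elim f f')
      = (1/2) * (π ⬝ᵥ (Q u).mulVec f) + (1/2) * (π' ⬝ᵥ (Q' u).mulVec f') := by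
    simp [Matrix.fromBlocks_mulVec, dotProduct, Fintype.sum_sum_type, Matrix.mulVec,
      Finset.mul_sum, mul_assoc]
  rw [key]
  set a := π ⬝ᵥ (Q u).mulVec f with ha
  set b := π' ⬝ᵥ (Q' u).mulVec f' with hb
  obtain ⟨h0, h1⟩ := hstoch u
  constructor
  · rintro ⟨hgt, hbe⟩
    rw [hbe]
    linarith
  · intro hgt
    rcases h01 u with hb0 | hb1
    · rw [← hb] at hb0; exfalso; linarith
    · rw [← hb] at hb1
      exact ⟨by rw [hb1] at hgt; linarith, hb1⟩
end
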